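/- arXiv:1207.2178 — 2 statements merged into one kernel-verified Lean document; each statement's English description precedes it below -/
import Mathlib

section
/- There exists an edge colouring of the complete graph K₄ on 4 vertices in which every vertex has colour degree at least 2 (in fact a proper 3-edge-colouring, so every vertex has colour degree 3), but which contains no rainbow matching of size 2. Consequently, in the main theorem the bound n ≥ 4k − 3 cannot be weakened to n ≥ 4k − 4 when k = 2. -/
/-- A rainbow matching in an edge-coloured graph `(G, c)`: a finite set of edges of `G`
that are pairwise vertex-disjoint and whose colours are pairwise distinct. -/
def IsRainbowMatching {V : Type*} (G : SimpleGraph V) (c : Sym2 V → ℕ)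
    (M : Finset (Sym2 V)) : Prop :=
  (∀ e ∈ M, e ∈ G.edgeSet) ∧
  (∀ e ∈ M, ∀ f ∈ M, e ≠ f → ∀ v : V, ¬(v ∈ e ∧ v ∈ f)) ∧
  (∀ e ∈ M, ∀ f ∈ M, c e = c f → e = f)

/-- The colour degree of a vertex `v`: the number of distinct colours on edges incident
with `v`. -/
noncomputable def colourDegree {V : Type*} (G : SimpleGraph V) (c : Sym2 V → ℕ)
    (v : V) : ℕ :=
  (c '' G.incidenceSet v).ncard

/-- There is an edge colouring of the complete graph `K₄` in which every vertex has
colour degree at least `2`, but which admits no rainbow matching of size `2`. -/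
theorem k4_no_rainbow_matching_of_size_two :
    ∃ c : Sym2 (Fin 4) → ℕ,
      (∀ v : Fin 4, 2 ≤ colourDegree (⊤ : SimpleGraph (Fin 4)) c v) ∧
      ¬ ∃ M : Finset (Sym2 (Fin 4)),
          IsRainbowMatching (⊤ : SimpleGraph (Fin 4)) c M ∧ M.card = 2 := by
  classical
  refine ⟨fun e => Sym2.lift ⟨fun a b => a.val ^^^ b.val, fun a b => Nat.xor_comm _ _⟩ e,
    ?_, ?_⟩
  · intro v
    rw [colourDegree, ← Nat.lt_iff_add_one_le,
      Set.one_lt_ncard_iff (Set.toFinite _)]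
    have mem : ∀ w : Fin 4, w ≠ v →
        Sym2.lift ⟨fun a b => a.val ^^^ b.val, fun a b => Nat.xor_comm _ _⟩ s(v, w) ∈
        (Sym2.lift ⟨fun a b => a.val ^^^ b.val, fun a b => Nat.xor_comm _ _⟩ ''
          (⊤ : SimpleGraph (Fin 4)).incidenceSet v) := by
      intro w hw
      exact ⟨s(v, w), ⟨by simp [hw.symm], Sym2.mem_mk_left v w⟩, rfl⟩
    fin_cases v
    · exact ⟨_, _, mem 1 (by decide), mem 2 (by decide), by decide⟩
    · exact ⟨_, _, mem 0 (by decide), mem 2 (by decide), by decide⟩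
    · exact ⟨_, _, mem 0 (by decide), mem 1 (by decide), by decide⟩
    · exact ⟨_, _, mem 0 (by decide), mem 1 (by decide), by decide⟩
  · rintro ⟨M, ⟨hE, hD, hC⟩, hcard⟩
    obtain ⟨e, f, hef, hM⟩ := Finset.card_eq_two.mp hcard
    have he : e ∈ M := by rw [hM]; exact Finset.mem_insert_self _ _
    have hf : f ∈ M := by rw [hM]; simp
    have key : ∀ e f : Sym2 (Fin 4), e ∈ (⊤ : SimpleGraph (Fin 4)).edgeSet →
        f ∈ (⊤ : SimpleGraph (Fin 4)).edgeSet →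
        (∀ v : Fin 4, ¬(v ∈ e ∧ v ∈ f)) →
        Sym2.lift ⟨fun a b => a.val ^^^ b.val, fun a b => Nat.xor_comm _ _⟩ e =
        Sym2.lift ⟨fun a b => a.val ^^^ b.val, fun a b => Nat.xor_comm _ _⟩ f := by
      decide
    exact hef (hC e he f hf (key e f (hE e he) (hE f hf) (hD e he f hf hef)))
end

section
/- There exists a simple graph on 8 vertices (the disjoint union of two copies of K₄) together with an edge colouring in which every vertex has colour degree at least 3, but which contains no rainbow matching of size 3. Consequently, in the main theorem the bound n ≥ 4k − 3 cannot be weakened to n ≥ 4k − 4 when k = 3. -/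
/-- Two disjoint copies of `K₄`: vertices are adjacent iff distinct and in the same
block of four. -/
def myG : SimpleGraph (Fin 8) where
  Adj v w := v ≠ w ∧ v.val / 4 = w.val / 4
  symm := by constructor; intro v w ⟨h1, h2⟩; exact ⟨h1.symm, h2.symm⟩
  loopless := by constructor; intro v ⟨h1, _⟩; exact h1 rfl

/-- The colouring: XOR of the two endpoints. -/
def myc : Sym2 (Fin 8) → ℕ :=
  Sym2.lift ⟨fun a b => a.val ^^^ b.val, fun _ _ => Nat.xor_comm _ _⟩

lemma myc_mk (a b : Fin 8) : myc s(a, b) = a.val ^^^ b.val := rfl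

lemma key : ∀ a b c d : Fin 8, a ≠ b → c ≠ d → a ≠ c → a ≠ d → b ≠ c → b ≠ d →
    a.val / 4 = b.val / 4 → c.val / 4 = d.val / 4 → a.val / 4 = c.val / 4 →
    a.val ^^^ b.val = c.val ^^^ d.val := by decide

lemma partner_facts : ∀ (v : Fin 8) (t : Fin 4), t ≠ 0 →
    (⟨v.val ^^^ t.val, Nat.xor_lt_two_pow (n := 3) v.isLt (by omega)⟩ : Fin 8) ≠ v ∧
    v.val / 4 = (v.val ^^^ t.val) / 4 ∧ v.val ^^^ (v.val ^^^ t.val) = t.val := by decide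

/-- There is a simple graph on `8` vertices together with an edge colouring in which
every vertex has colour degree at least `3`, but which admits no rainbow matching of
size `3`. (Take two disjoint properly 3-edge-coloured copies of `K₄`.) -/
theorem two_k4_no_rainbow_matching_of_size_three :
    ∃ (G : SimpleGraph (Fin 8)) (c : Sym2 (Fin 8) → ℕ),
      (∀ v : Fin 8, 3 ≤ colourDegree G c v) ∧
      ¬ ∃ M : Finset (Sym2 (Fin 8)), IsRainbowMatching G c M ∧ M.card = 3 := by
  refine ⟨myG, myc, ?_, ?_⟩
  · intro v
    have hsub : ({1, 2, 3} : Set ℕ) ⊆ myc '' myG.incidenceSet v := by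
      intro t ht
      have hne : ∃ t' : Fin 4, t' ≠ 0 ∧ (t' : ℕ) = t := by
        rcases ht with h | h | h
        · exact ⟨1, by decide, by simp [h]⟩
        · exact ⟨2, by decide, by simp_all⟩
        · exact ⟨3, by decide, by subst h; decide⟩
      obtain ⟨t', ht0, htv⟩ := hne
      obtain ⟨hne, hblk, hxor⟩ := partner_facts v t' ht0
      set w : Fin 8 := ⟨v.val ^^^ t'.val, Nat.xor_lt_two_pow (n := 3) v.isLt (by omega)⟩
      refine ⟨s(v, w), ⟨?_, ?_⟩, ?_⟩
      · exact (SimpleGraph.mem_edgeSet _).mpr ⟨fun h => hne h.symm, hblk⟩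
      · exact Sym2.mem_mk_left v w
      · rw [myc_mk]; exact htv ▸ hxor
    have h3 : ({1, 2, 3} : Set ℕ).ncard = 3 := by
      rw [Set.ncard_insert_of_notMem (by simp), Set.ncard_insert_of_notMem (by simp),
        Set.ncard_singleton]
    calc 3 = ({1, 2, 3} : Set ℕ).ncard := h3.symm
      _ ≤ _ := Set.ncard_le_ncard hsub (Set.toFinite _)
  · rintro ⟨M, ⟨hEdge, hDisj, hRain⟩, hCard⟩
    -- pigeonhole on blocks
    have hmaps : ∀ e ∈ M, (Sym2.lift ⟨fun a b : Fin 8 => min (a.val / 4) (b.val / 4),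
        fun _ _ => min_comm _ _⟩ e) ∈ ({0, 1} : Finset ℕ) := by
      intro e he
      induction e using Sym2.ind with
      | _ a b =>
        have := hEdge _ he
        rw [SimpleGraph.mem_edgeSet _] at this
        simp only [Sym2.lift_mk, Finset.mem_insert, Finset.mem_singleton]
        omega
    have hcardlt : ({0, 1} : Finset ℕ).card < M.card := by
      rw [hCard]; decide
    obtain ⟨e, he, f, hf, hef, heq⟩ :=
      Finset.exists_ne_map_eq_of_card_lt_of_maps_to hcardlt hmaps
    induction e using Sym2.ind with
    | _ a b =>
    induction f using Sym2.ind with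
    | _ x y =>
      have hab := (SimpleGraph.mem_edgeSet _).mp (hEdge _ he)
      have hxy := (SimpleGraph.mem_edgeSet _).mp (hEdge _ hf)
      have hd := hDisj _ he _ hf hef
      have hax : a ≠ x := fun h => hd a ⟨Sym2.mem_mk_left a b, h ▸ Sym2.mem_mk_left x y⟩
      have hay : a ≠ y := fun h => hd a ⟨Sym2.mem_mk_left a b, h ▸ Sym2.mem_mk_right x y⟩
      have hbx : b ≠ x := fun h => hd b ⟨Sym2.mem_mk_right a b, h ▸ Sym2.mem_mk_left x y⟩
      have hby : b ≠ y := fun h => hd b ⟨Sym2.mem_mk_right a b, h ▸ Sym2.mem_mk_right x y⟩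
      have hblk : a.val / 4 = x.val / 4 := by
        simp only [Sym2.lift_mk] at heq
        have h1 := hab.2
        have h2 := hxy.2
        omega
      have : myc s(a, b) = myc s(x, y) := by
        rw [myc_mk, myc_mk]
        exact key a b x y hab.1 hxy.1 hax hay hbx hby hab.2 hxy.2 hblk
      exact hef (hRain _ he _ hf this)
end
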